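/- Under the hypotheses of the abstract fixed point lemma, the solution depends Lipschitz-continuously on the data: if ‖y‖ ≤ ε, ‖ỹ‖ ≤ ε, x = y + B(x), x̃ = ỹ + B(x̃), ‖x‖ ≤ 2ε, ‖x̃‖ ≤ 2ε, then ‖x − x̃‖ ≤ (1 − 2^(ρ+1) K ε^ρ)^(−1) ‖y − ỹ‖. -/
import Mathlib


/-- Abstract fixed point lemma (Lipschitz dependence on the data): if
`‖y‖ ≤ ε`, `‖ỹ‖ ≤ ε`, `x = y + B x`, `x̃ = ỹ + B x̃`, `‖x‖ ≤ 2ε`, `‖x̃‖ ≤ 2ε`,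
then `‖x − x̃‖ ≤ (1 − 2^(ρ+1) K ε^ρ)⁻¹ ‖y − ỹ‖`. -/
theorem abstract_fixed_point_lipschitz
    {X : Type*} [NormedAddCommGroup X] [NormedSpace ℝ X] [CompleteSpace X]
    (ρ K : ℝ) (hρ : 0 < ρ) (hK : 0 < K)
    (B : X → X) (hB0 : B 0 = 0)
    (hB : ∀ x z : X, ‖B x - B z‖ ≤ K * ‖x - z‖ * (‖x‖ ^ ρ + ‖z‖ ^ ρ))
    (R : ℝ) (hR : R = (2 ^ (ρ + 1) * K) ^ (-1 / ρ))
    (ε : ℝ) (hε : 0 < ε) (hεR : ε < R)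
    (y ytil : X) (hy : ‖y‖ ≤ ε) (hytil : ‖ytil‖ ≤ ε)
    (x xtil : X)
    (hx : x = y + B x) (hxball : ‖x‖ ≤ 2 * ε)
    (hxtil : xtil = ytil + B xtil) (hxtilball : ‖xtil‖ ≤ 2 * ε) :
    ‖x - xtil‖ ≤ (1 - 2 ^ (ρ + 1) * K * ε ^ ρ)⁻¹ * ‖y - ytil‖ := by
  have hApos : (0:ℝ) < 2 ^ (ρ + 1) * K := by positivity
  have hq : ε ^ ρ < (2 ^ (ρ + 1) * K)⁻¹ := by
    have h1 : ε ^ ρ < ((2 ^ (ρ + 1) * K) ^ (-1 / ρ)) ^ ρ := by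
      rw [← hR]; exact Real.rpow_lt_rpow hε.le hεR hρ
    have h2 : ((2 ^ (ρ + 1) * K) ^ (-1 / ρ)) ^ ρ = (2 ^ (ρ + 1) * K)⁻¹ := by
      rw [← Real.rpow_mul hApos.le, div_mul_cancel₀ _ hρ.ne', Real.rpow_neg_one]
    rwa [h2] at h1
  have hq1 : 2 ^ (ρ + 1) * K * ε ^ ρ < 1 := by
    have := mul_lt_mul_of_pos_left hq hApos
    rwa [mul_inv_cancel₀ hApos.ne'] at this
  -- bound on ‖x‖^ρ + ‖xtil‖^ρ
  have hxn : ‖x‖ ^ ρ ≤ 2 ^ ρ * ε ^ ρ := by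
    rw [← Real.mul_rpow (by norm_num) hε.le]
    exact Real.rpow_le_rpow (norm_nonneg _) hxball hρ.le
  have hxtn : ‖xtil‖ ^ ρ ≤ 2 ^ ρ * ε ^ ρ := by
    rw [← Real.mul_rpow (by norm_num) hε.le]
    exact Real.rpow_le_rpow (norm_nonneg _) hxtilball hρ.le
  have h2r : (2:ℝ) ^ (ρ + 1) = 2 ^ ρ * 2 := by
    rw [Real.rpow_add (by norm_num), Real.rpow_one]
  have key : ‖x - xtil‖ ≤ ‖y - ytil‖ + 2 ^ (ρ + 1) * K * ε ^ ρ * ‖x - xtil‖ := by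
    have hdecomp : x - xtil = (y - ytil) + (B x - B xtil) := by
      conv_lhs => rw [hx, hxtil]
      abel
    calc ‖x - xtil‖ ≤ ‖y - ytil‖ + ‖B x - B xtil‖ := by
          rw [hdecomp]; exact norm_add_le _ _
      _ ≤ ‖y - ytil‖ + K * ‖x - xtil‖ * (‖x‖ ^ ρ + ‖xtil‖ ^ ρ) := by
          linarith [hB x xtil]
      _ ≤ ‖y - ytil‖ + 2 ^ (ρ + 1) * K * ε ^ ρ * ‖x - xtil‖ := by
          have hsum : ‖x‖ ^ ρ + ‖xtil‖ ^ ρ ≤ 2 ^ (ρ + 1) * ε ^ ρ := by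
            rw [h2r]; nlinarith
          nlinarith [norm_nonneg (x - xtil), mul_le_mul_of_nonneg_left hsum
            (mul_nonneg hK.le (norm_nonneg (x - xtil)))]
  rw [inv_mul_eq_div, le_div_iff₀ (by linarith)]
  nlinarith
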